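/- arXiv:1608.06181 — 3 statements merged into one kernel-verified Lean document; each statement's English description precedes it below -/
import Mathlib

section
/- Let α > 0 and m a nonnegative integer. There is a constant C > 0 such that for every holomorphic function g on the unit disk D with sup_{z∈D}(1-|z|²)^{α+m-1}|g(z)| = M < ∞, and for all z, w ∈ D, one has |(1-|z|²)^{α+m-1} g(z) - (1-|w|²)^{α+m-1} g(w)| ≤ C · M · ρ(z,w), where ρ(z,w) = |(z-w)/(1-w̄z)| is the pseudo-hyperbolic distance. -/
/-!
Write `e = α + m - 1`, `A = 1 - |z|²`, `B = 1 - |w|²` and `ρ = ρ(z, w)`. If `ρ > 1/8`, the left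
side is at most `2M ≤ 16 M ρ`. If `ρ ≤ 1/8`, then `|z - w| ≤ 2ρB`, so `z` lies in the disc of
radius `(1 - |w|)/2` about `w`, on which `1 - |u|²` stays within a factor `4` of `B`. Split
`A^e g(z) - B^e g(w) = (A^e - B^e) g(z) + B^e (g(z) - g(w))`. Since `|A - B| ≤ 2|z - w| ≤ 4ρB`,
the mean value theorem for `t ↦ t^e` on `[1/2, 2]` bounds the first term by a multiple of `Mρ`.
On that disc `|g| ≤ 4^|e| M / B^e`, so the Schwarz lemma bounds the second term by
`16 · 4^|e| M ρ`.
-/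

noncomputable section
open Complex Metric

theorem rpow_le_rpow_abs_of_inv_le_of_le {c u : ℝ} (x : ℝ) (hc : 1 ≤ c) (h₁ : c⁻¹ ≤ u)
    (h₂ : u ≤ c) : u ^ x ≤ c ^ |x| := by
  have hc₀ : 0 < c := zero_lt_one.trans_le hc
  have hu : 0 < u := (inv_pos.2 hc₀).trans_le h₁
  have hlog : |Real.log u| ≤ Real.log c := abs_le.2
    ⟨by simpa [Real.log_inv] using Real.log_le_log (by positivity) h₁, Real.log_le_log hu h₂⟩
  rw [Real.rpow_def_of_pos hu, Real.rpow_def_of_pos hc₀]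
  refine Real.exp_le_exp.2 ?_
  calc Real.log u * x ≤ |Real.log u| * |x| := (le_abs_self _).trans_eq (abs_mul _ _)
    _ ≤ Real.log c * |x| := by gcongr

theorem rpow_le_rpow_abs_mul_rpow {a b c : ℝ} (x : ℝ) (ha : 0 < a) (hc : 1 ≤ c)
    (hba : b ≤ c * a) (hab : a ≤ c * b) : b ^ x ≤ c ^ |x| * a ^ x := by
  have hc₀ : 0 < c := zero_lt_one.trans_le hc
  have hb : 0 < b := pos_of_mul_pos_right (ha.trans_le hab) hc₀.le
  have hratio : (b / a) ^ x ≤ c ^ |x| := rpow_le_rpow_abs_of_inv_le_of_le x hc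
    (by rwa [le_div_iff₀ ha, inv_mul_le_iff₀ hc₀]) (by rwa [div_le_iff₀ ha])
  calc b ^ x = (b / a) ^ x * a ^ x := by
        rw [Real.div_rpow hb.le ha.le, div_mul_cancel₀ _ (Real.rpow_pos_of_pos ha x).ne']
    _ ≤ c ^ |x| * a ^ x := by gcongr

theorem abs_rpow_sub_one_le {t : ℝ} (x : ℝ) (h₁ : 1 / 2 ≤ t) (h₂ : t ≤ 2) :
    |t ^ x - 1| ≤ |x| * 2 ^ (|x| + 1) * |t - 1| := by
  have hderiv_le : ∀ u ∈ Set.Icc (1 / 2 : ℝ) 2, ‖x * u ^ (x - 1)‖ ≤ |x| * 2 ^ (|x| + 1) := by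
    intro u hu
    have hu₀ : 0 < u := by linarith [hu.1]
    rw [norm_mul, Real.norm_of_nonneg (Real.rpow_pos_of_pos hu₀ _).le, Real.norm_eq_abs]
    gcongr
    calc u ^ (x - 1) ≤ 2 ^ |x - 1| :=
          rpow_le_rpow_abs_of_inv_le_of_le _ one_le_two (by norm_num [hu.1]) hu.2
      _ ≤ 2 ^ (|x| + 1) :=
          Real.rpow_le_rpow_of_exponent_le one_le_two (by simpa using abs_sub x 1)
  have hmvt := (convex_Icc (1 / 2 : ℝ) 2).norm_image_sub_le_of_norm_hasDerivWithin_le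
    (fun u hu => (Real.hasDerivAt_rpow_const (Or.inl (by linarith [hu.1]))).hasDerivWithinAt)
    hderiv_le (x := 1) (y := t) (by norm_num) ⟨h₁, h₂⟩
  simpa [Real.norm_eq_abs, Real.one_rpow] using hmvt

theorem abs_rpow_sub_rpow_le {a b : ℝ} (x : ℝ) (hb : 0 < b) (hab : |a - b| ≤ b / 2) :
    |a ^ x - b ^ x| ≤ |x| * 2 ^ (|x| + 1) * (|a - b| / b) * b ^ x := by
  have hbx : 0 < b ^ x := Real.rpow_pos_of_pos hb x
  have ht : |a / b - 1| = |a - b| / b := by rw [div_sub_one hb.ne', abs_div, abs_of_pos hb]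
  have hratio : |a - b| / b ≤ 1 / 2 := by rw [div_le_iff₀ hb]; linarith
  obtain ⟨ht₁, ht₂⟩ := abs_le.1 (ht.trans_le hratio)
  calc |a ^ x - b ^ x| = |(a / b) ^ x - 1| * b ^ x := by
        rw [← abs_of_pos hbx, ← abs_mul, sub_one_mul, abs_of_pos hbx,
          ← Real.mul_rpow (by linarith) hb.le, div_mul_cancel₀ a hb.ne']
    _ ≤ |x| * 2 ^ (|x| + 1) * (|a - b| / b) * b ^ x := by
        rw [← ht]
        gcongr
        exact abs_rpow_sub_one_le x (by linarith) (by linarith)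

section UnitBall

variable {E : Type*} [SeminormedAddCommGroup E]

theorem one_sub_sq_norm_pos {z : E} (hz : ‖z‖ < 1) : 0 < 1 - ‖z‖ ^ 2 :=
  sub_pos.2 (pow_lt_one₀ (norm_nonneg z) hz two_ne_zero)

theorem abs_one_sub_sq_norm_sub_le {z w : E} (hz : ‖z‖ ≤ 1) (hw : ‖w‖ ≤ 1) :
    |(1 - ‖z‖ ^ 2) - (1 - ‖w‖ ^ 2)| ≤ 2 * ‖z - w‖ := by
  rw [show (1 - ‖z‖ ^ 2) - (1 - ‖w‖ ^ 2) = (‖w‖ - ‖z‖) * (‖w‖ + ‖z‖) by ring, abs_mul,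
    abs_sub_comm, abs_of_nonneg (add_nonneg (norm_nonneg w) (norm_nonneg z))]
  nlinarith [abs_norm_sub_norm_le z w, abs_nonneg (‖z‖ - ‖w‖)]

theorem one_sub_sq_norm_comparable_of_dist_lt {u w : E} (hu : dist u w < (1 - ‖w‖) / 2) :
    1 - ‖w‖ ^ 2 ≤ 4 * (1 - ‖u‖ ^ 2) ∧ 1 - ‖u‖ ^ 2 ≤ 4 * (1 - ‖w‖ ^ 2) := by
  rw [dist_eq_norm] at hu
  obtain ⟨h₁, h₂⟩ := abs_le.1 ((abs_norm_sub_norm_le u w).trans hu.le)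
  have := norm_nonneg u
  have := norm_nonneg w
  constructor <;> nlinarith

theorem ball_half_subset_ball_zero_one {w : E} (hw : ‖w‖ < 1) :
    ball w ((1 - ‖w‖) / 2) ⊆ ball (0 : E) 1 :=
  ball_subset_ball' (by rw [dist_zero_right]; linarith)

end UnitBall

def pseudoHyperbolic (z w : ℂ) : ℝ := ‖(z - w) / (1 - starRingEnd ℂ w * z)‖

theorem norm_one_sub_conj_mul_le (z : ℂ) {w : ℂ} (hw : ‖w‖ ≤ 1) :
    ‖1 - starRingEnd ℂ w * z‖ ≤ (1 - ‖w‖ ^ 2) + ‖z - w‖ := by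
  have hsplit :
      1 - starRingEnd ℂ w * z = ((1 - ‖w‖ ^ 2 : ℝ) : ℂ) + starRingEnd ℂ w * (w - z) := by
    push_cast
    linear_combination -Complex.conj_mul' w
  rw [hsplit]
  refine (norm_add_le _ _).trans (add_le_add ?_ ?_)
  · rw [Complex.norm_real, Real.norm_of_nonneg (by nlinarith [norm_nonneg w])]
  · rw [norm_mul, Complex.norm_conj, norm_sub_rev]
    exact mul_le_of_le_one_left (norm_nonneg _) hw

theorem norm_sub_le_two_mul_pseudoHyperbolic {z w : ℂ} (hz : ‖z‖ < 1) (hw : ‖w‖ < 1)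
    (hρ : pseudoHyperbolic z w ≤ 1 / 2) :
    ‖z - w‖ ≤ 2 * pseudoHyperbolic z w * (1 - ‖w‖ ^ 2) := by
  have hne : 1 - starRingEnd ℂ w * z ≠ 0 := by
    refine sub_ne_zero.2 fun h => ?_
    have : ‖starRingEnd ℂ w * z‖ < 1 := by
      rw [norm_mul, Complex.norm_conj]
      nlinarith [norm_nonneg z, norm_nonneg w]
    rw [← h, norm_one] at this
    exact lt_irrefl _ this
  have hρdef : ‖z - w‖ = pseudoHyperbolic z w * ‖1 - starRingEnd ℂ w * z‖ := by
    rw [pseudoHyperbolic, norm_div, div_mul_cancel₀ _ (norm_ne_zero_iff.2 hne)]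
  have hρ₀ : 0 ≤ pseudoHyperbolic z w := norm_nonneg _
  have := mul_le_mul_of_nonneg_left (norm_one_sub_conj_mul_le z hw.le) hρ₀
  nlinarith [mul_nonneg (sub_nonneg.2 hρ) (norm_nonneg (z - w))]

section WeightedBound

variable {e M : ℝ} {g : ℂ → ℂ}

theorem weight_mul_norm_le_of_mem_ball
    (hM : ∀ z ∈ ball (0 : ℂ) 1, (1 - ‖z‖ ^ 2) ^ e * ‖g z‖ ≤ M) {u w : ℂ} (hw : ‖w‖ < 1)
    (hu : u ∈ ball w ((1 - ‖w‖) / 2)) : (1 - ‖w‖ ^ 2) ^ e * ‖g u‖ ≤ 4 ^ |e| * M := by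
  obtain ⟨h₁, h₂⟩ := one_sub_sq_norm_comparable_of_dist_lt hu
  have hu₁ : u ∈ ball (0 : ℂ) 1 := ball_half_subset_ball_zero_one hw hu
  have hu₀ : 0 < 1 - ‖u‖ ^ 2 := one_sub_sq_norm_pos (mem_ball_zero_iff.1 hu₁)
  calc (1 - ‖w‖ ^ 2) ^ e * ‖g u‖ ≤ 4 ^ |e| * (1 - ‖u‖ ^ 2) ^ e * ‖g u‖ := by
        gcongr
        exact rpow_le_rpow_abs_mul_rpow e hu₀ (by norm_num) h₁ h₂
    _ ≤ 4 ^ |e| * M := by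
        rw [mul_assoc]
        gcongr
        exact hM u hu₁

theorem weight_mul_norm_sub_le_of_mem_ball (hg : DifferentiableOn ℂ g (ball 0 1))
    (hM : ∀ z ∈ ball (0 : ℂ) 1, (1 - ‖z‖ ^ 2) ^ e * ‖g z‖ ≤ M) {z w : ℂ} (hw : ‖w‖ < 1)
    (hz : z ∈ ball w ((1 - ‖w‖) / 2)) :
    (1 - ‖w‖ ^ 2) ^ e * ‖g z - g w‖ ≤ 4 * 4 ^ |e| * M / (1 - ‖w‖) * ‖z - w‖ := by
  have hBe : 0 < (1 - ‖w‖ ^ 2) ^ e := Real.rpow_pos_of_pos (one_sub_sq_norm_pos hw) e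
  have hbound : ∀ u ∈ ball w ((1 - ‖w‖) / 2), ‖g u‖ ≤ 4 ^ |e| * M / (1 - ‖w‖ ^ 2) ^ e :=
    fun u hu => by
      rw [le_div_iff₀ hBe, mul_comm]
      exact weight_mul_norm_le_of_mem_ball hM hw hu
  have hmaps : Set.MapsTo g (ball w ((1 - ‖w‖) / 2))
      (closedBall (g w) (2 * (4 ^ |e| * M / (1 - ‖w‖ ^ 2) ^ e))) := fun u hu => by
    rw [mem_closedBall, dist_eq_norm]
    linarith [norm_sub_le (g u) (g w), hbound u hu,
      hbound w (mem_ball_self (pos_of_mem_ball hz))]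
  have hschwarz := Complex.dist_le_div_mul_dist_of_mapsTo_ball
    (hg.mono (ball_half_subset_ball_zero_one hw)) hmaps hz
  rw [dist_eq_norm, dist_eq_norm] at hschwarz
  have hw₁ : 0 < 1 - ‖w‖ := by linarith
  calc (1 - ‖w‖ ^ 2) ^ e * ‖g z - g w‖
      ≤ (1 - ‖w‖ ^ 2) ^ e *
          (2 * (4 ^ |e| * M / (1 - ‖w‖ ^ 2) ^ e) / ((1 - ‖w‖) / 2) * ‖z - w‖) := by
        gcongr
    _ = 4 * 4 ^ |e| * M / (1 - ‖w‖) * ‖z - w‖ := by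
        field_simp
        ring

theorem weight_sub_mul_norm_le_of_pseudoHyperbolic_le
    (hM : ∀ z ∈ ball (0 : ℂ) 1, (1 - ‖z‖ ^ 2) ^ e * ‖g z‖ ≤ M) {z w : ℂ} (hz : ‖z‖ < 1)
    (hw : ‖w‖ < 1) (hρ : pseudoHyperbolic z w ≤ 1 / 8) :
    |(1 - ‖z‖ ^ 2) ^ e - (1 - ‖w‖ ^ 2) ^ e| * ‖g z‖ ≤
      4 * (|e| * 2 ^ (|e| + 1)) * 2 ^ |e| * M * pseudoHyperbolic z w := by
  have hA := one_sub_sq_norm_pos hz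
  have hB := one_sub_sq_norm_pos hw
  have hAB : |(1 - ‖z‖ ^ 2) - (1 - ‖w‖ ^ 2)| ≤ 4 * pseudoHyperbolic z w * (1 - ‖w‖ ^ 2) :=
    (abs_one_sub_sq_norm_sub_le hz.le hw.le).trans
      (by linarith [norm_sub_le_two_mul_pseudoHyperbolic hz hw (by linarith)])
  obtain ⟨h₁, h₂⟩ := abs_le.1 hAB
  have hρ₀ : 0 ≤ pseudoHyperbolic z w := norm_nonneg _
  calc |(1 - ‖z‖ ^ 2) ^ e - (1 - ‖w‖ ^ 2) ^ e| * ‖g z‖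
      ≤ |e| * 2 ^ (|e| + 1) * (|(1 - ‖z‖ ^ 2) - (1 - ‖w‖ ^ 2)| / (1 - ‖w‖ ^ 2)) *
          (1 - ‖w‖ ^ 2) ^ e * ‖g z‖ := by
        gcongr
        exact abs_rpow_sub_rpow_le e hB (by nlinarith)
    _ ≤ |e| * 2 ^ (|e| + 1) * (4 * pseudoHyperbolic z w) * (2 ^ |e| * (1 - ‖z‖ ^ 2) ^ e) *
          ‖g z‖ := by
        gcongr
        · exact (div_le_iff₀ hB).2 hAB
        · exact rpow_le_rpow_abs_mul_rpow e hA one_le_two (by nlinarith) (by nlinarith)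
    _ = 4 * (|e| * 2 ^ (|e| + 1)) * 2 ^ |e| * pseudoHyperbolic z w *
          ((1 - ‖z‖ ^ 2) ^ e * ‖g z‖) := by ring
    _ ≤ 4 * (|e| * 2 ^ (|e| + 1)) * 2 ^ |e| * pseudoHyperbolic z w * M := by
        gcongr
        exact hM z (mem_ball_zero_iff.2 hz)
    _ = 4 * (|e| * 2 ^ (|e| + 1)) * 2 ^ |e| * M * pseudoHyperbolic z w := by ring

theorem weight_mul_norm_sub_le_of_pseudoHyperbolic_le (hg : DifferentiableOn ℂ g (ball 0 1))
    (hM : ∀ z ∈ ball (0 : ℂ) 1, (1 - ‖z‖ ^ 2) ^ e * ‖g z‖ ≤ M) {z w : ℂ} (hz : ‖z‖ < 1)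
    (hw : ‖w‖ < 1) (hρ : pseudoHyperbolic z w ≤ 1 / 8) :
    (1 - ‖w‖ ^ 2) ^ e * ‖g z - g w‖ ≤ 16 * 4 ^ |e| * M * pseudoHyperbolic z w := by
  have hw₁ : 0 < 1 - ‖w‖ := by linarith
  have hM₀ : 0 ≤ M := (mul_nonneg (Real.rpow_pos_of_pos (one_sub_sq_norm_pos hw) e).le
    (norm_nonneg _)).trans (hM w (mem_ball_zero_iff.2 hw))
  have hρ₀ : 0 ≤ pseudoHyperbolic z w := norm_nonneg _
  have hB : 1 - ‖w‖ ^ 2 < 2 * (1 - ‖w‖) := by nlinarith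
  have hzwB := norm_sub_le_two_mul_pseudoHyperbolic hz hw (by linarith)
  have hzw : ‖z - w‖ ≤ 4 * pseudoHyperbolic z w * (1 - ‖w‖) := by
    nlinarith [mul_le_mul_of_nonneg_left hB.le hρ₀]
  have hz' : z ∈ ball w ((1 - ‖w‖) / 2) := by
    rw [mem_ball, dist_eq_norm]
    nlinarith [mul_le_mul_of_nonneg_right hρ (one_sub_sq_norm_pos hw).le]
  calc (1 - ‖w‖ ^ 2) ^ e * ‖g z - g w‖ ≤ 4 * 4 ^ |e| * M / (1 - ‖w‖) * ‖z - w‖ :=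
        weight_mul_norm_sub_le_of_mem_ball hg hM hw hz'
    _ ≤ 4 * 4 ^ |e| * M / (1 - ‖w‖) * (4 * pseudoHyperbolic z w * (1 - ‖w‖)) := by gcongr
    _ = 16 * 4 ^ |e| * M * pseudoHyperbolic z w := by
        field_simp
        ring

end WeightedBound

theorem norm_ofReal_weight_mul {e : ℝ} {z : ℂ} (hz : ‖z‖ < 1) (x : ℂ) :
    ‖(((1 - ‖z‖ ^ 2) ^ e : ℝ) : ℂ) * x‖ = (1 - ‖z‖ ^ 2) ^ e * ‖x‖ := by
  rw [← Complex.real_smul,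
    norm_smul_of_nonneg (Real.rpow_pos_of_pos (one_sub_sq_norm_pos hz) e).le]

theorem norm_weight_mul_sub_weight_mul_le {e : ℝ} {g : ℂ → ℂ} {z w : ℂ} (hw : ‖w‖ < 1) :
    ‖(((1 - ‖z‖ ^ 2) ^ e : ℝ) : ℂ) * g z - (((1 - ‖w‖ ^ 2) ^ e : ℝ) : ℂ) * g w‖ ≤
      |(1 - ‖z‖ ^ 2) ^ e - (1 - ‖w‖ ^ 2) ^ e| * ‖g z‖ + (1 - ‖w‖ ^ 2) ^ e * ‖g z - g w‖ := by
  have hsplit : (((1 - ‖z‖ ^ 2) ^ e : ℝ) : ℂ) * g z - (((1 - ‖w‖ ^ 2) ^ e : ℝ) : ℂ) * g w =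
      (((1 - ‖z‖ ^ 2) ^ e - (1 - ‖w‖ ^ 2) ^ e : ℝ) : ℂ) * g z +
        (((1 - ‖w‖ ^ 2) ^ e : ℝ) : ℂ) * (g z - g w) := by
    push_cast
    ring
  rw [hsplit]
  refine (norm_add_le _ _).trans_eq ?_
  rw [norm_mul, Complex.norm_real, Real.norm_eq_abs, norm_ofReal_weight_mul hw]

theorem exists_norm_weight_mul_sub_le_mul_pseudoHyperbolic (e : ℝ) :
    ∃ C > (0 : ℝ), ∀ g : ℂ → ℂ, DifferentiableOn ℂ g (ball (0 : ℂ) 1) → ∀ M : ℝ,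
      (∀ z ∈ ball (0 : ℂ) 1, (1 - ‖z‖ ^ 2) ^ e * ‖g z‖ ≤ M) →
      ∀ z ∈ ball (0 : ℂ) 1, ∀ w ∈ ball (0 : ℂ) 1,
        ‖(((1 - ‖z‖ ^ 2) ^ e : ℝ) : ℂ) * g z - (((1 - ‖w‖ ^ 2) ^ e : ℝ) : ℂ) * g w‖ ≤
          C * M * pseudoHyperbolic z w := by
  set K := 4 * (|e| * 2 ^ (|e| + 1)) * 2 ^ |e| + 16 * 4 ^ |e|
  refine ⟨16 + K, by positivity, fun g hg M hM z hz w hw => ?_⟩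
  have hMz := hM z hz
  have hMw := hM w hw
  rw [mem_ball_zero_iff] at hz hw
  have hM₀ : 0 ≤ M := (mul_nonneg (Real.rpow_pos_of_pos (one_sub_sq_norm_pos hw) e).le
    (norm_nonneg _)).trans hMw
  have hK : 0 ≤ K := by positivity
  have hρ₀ : 0 ≤ pseudoHyperbolic z w := norm_nonneg _
  rcases le_or_gt (pseudoHyperbolic z w) (1 / 8) with hρ | hρ
  · calc _ ≤ _ := norm_weight_mul_sub_weight_mul_le hw
      _ ≤ K * M * pseudoHyperbolic z w := by
          linarith [weight_sub_mul_norm_le_of_pseudoHyperbolic_le hM hz hw hρ,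
            weight_mul_norm_sub_le_of_pseudoHyperbolic_le hg hM hz hw hρ]
      _ ≤ (16 + K) * M * pseudoHyperbolic z w := by gcongr; linarith
  · calc _ ≤ _ := norm_sub_le _ _
      _ ≤ 2 * M := by rw [norm_ofReal_weight_mul hz, norm_ofReal_weight_mul hw]; linarith
      _ ≤ (16 + K) * M * pseudoHyperbolic z w := by nlinarith [mul_nonneg hK hM₀]

theorem stmt2_general (m : ℕ) (α : ℝ) :
    ∃ C > (0:ℝ), ∀ g : ℂ → ℂ, DifferentiableOn ℂ g (Metric.ball (0:ℂ) 1) →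
      ∀ M : ℝ,
      (∀ z ∈ Metric.ball (0:ℂ) 1,
          (1 - ‖z‖ ^ 2) ^ (α + m - 1) * ‖g z‖ ≤ M) →
      ∀ z ∈ Metric.ball (0:ℂ) 1, ∀ w ∈ Metric.ball (0:ℂ) 1,
        ‖(((1 - ‖z‖ ^ 2) ^ (α + m - 1) : ℝ) : ℂ) * g z -
            (((1 - ‖w‖ ^ 2) ^ (α + m - 1) : ℝ) : ℂ) * g w‖ ≤
          C * M * ‖(z - w) / (1 - (starRingEnd ℂ) w * z)‖ :=
  exists_norm_weight_mul_sub_le_mul_pseudoHyperbolic (α + m - 1)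

/-- Lipschitz-type estimate in the pseudo-hyperbolic distance for functions with
finite weighted sup norm sup (1-|z|²)^{α+m-1}|g(z)|. -/
theorem stmt2 (m : ℕ) (α : ℝ) (hα : 0 < α) :
    ∃ C > (0:ℝ), ∀ g : ℂ → ℂ, DifferentiableOn ℂ g (Metric.ball (0:ℂ) 1) →
      ∀ M : ℝ,
      (∀ z ∈ Metric.ball (0:ℂ) 1,
          (1 - ‖z‖ ^ 2) ^ (α + m - 1) * ‖g z‖ ≤ M) →
      ∀ z ∈ Metric.ball (0:ℂ) 1, ∀ w ∈ Metric.ball (0:ℂ) 1,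
        ‖(((1 - ‖z‖ ^ 2) ^ (α + m - 1) : ℝ) : ℂ) * g z -
            (((1 - ‖w‖ ^ 2) ^ (α + m - 1) : ℝ) : ℂ) * g w‖ ≤
          C * M * ‖(z - w) / (1 - (starRingEnd ℂ) w * z)‖ :=
  stmt2_general m α
end
end

section
/- Let m ∈ ℕ, α > 0, v a bounded strictly positive continuous weight on D, u₁, u₂ holomorphic on D and φ₁, φ₂ holomorphic self-maps of D. If the difference operator T = D^m_{φ₁,u₁} − D^m_{φ₂,u₂}, defined by (Tf)(z) = u₁(z) f^{(m)}(φ₁(z)) − u₂(z) f^{(m)}(φ₂(z)), is bounded from B^α to H^∞_v, then sup_{n≥1} n^{α+m-1} ‖u₁ φ₁^n − u₂ φ₂^n‖_v < ∞, where ‖g‖_v = sup_{z∈D} v(z)|g(z)|. -/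
/-!
Test the boundedness of `T` on the monomials `w ^ (n + m)`. From `r ^ k ≤ exp (-k (1 - r))` and
`s ^ α exp (-s) ≤ α ^ α` one gets `(1 - r²) ^ α N r ^ (N - 1) ≲ N ^ (1 - α)`, so
`‖w ^ (n + m)‖_{B^α} ≲ (n + m) ^ (1 - α) ≤ (m + 1) n ^ (1 - α)`. On the other hand
`T (w ^ (n + m)) = (n + m)! / n! · (u₁ φ₁ ^ n - u₂ φ₂ ^ n)` and `(n + m)! / n! ≥ n ^ m`.
-/

noncomputable section
open Complex

/-- The open unit disk in ℂ. -/
def UD : Set ℂ := Metric.ball 0 1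

/-- Membership in the Bloch-type space B^α. -/
def InBloch (α : ℝ) (f : ℂ → ℂ) : Prop :=
  DifferentiableOn ℂ f UD ∧
    ∃ C, ∀ z ∈ UD, (1 - ‖z‖ ^ 2) ^ α * ‖deriv f z‖ ≤ C

/-- The Bloch-type norm ‖f‖_{B^α}. -/
def blochNorm (α : ℝ) (f : ℂ → ℂ) : ℝ :=
  ‖f 0‖ +
    sSup ((fun z => (1 - ‖z‖ ^ 2) ^ α * ‖deriv f z‖) '' UD)

open Real

lemma rpow_mul_exp_neg_le {α s : ℝ} (hα : 0 < α) (hs : 0 ≤ s) :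
    s ^ α * Real.exp (-s) ≤ α ^ α := by
  have hquot : (s / α) ^ α ≤ Real.exp s :=
    calc (s / α) ^ α ≤ Real.exp (s / α) ^ α := by
          gcongr
          linarith [Real.add_one_le_exp (s / α)]
      _ = Real.exp s := by rw [← Real.exp_mul, div_mul_cancel₀ _ hα.ne']
  calc s ^ α * Real.exp (-s) = α ^ α * (s / α) ^ α * Real.exp (-s) := by
        rw [← mul_rpow hα.le (by positivity), mul_div_cancel₀ _ hα.ne']
    _ ≤ α ^ α * Real.exp s * Real.exp (-s) := by gcongr
    _ = α ^ α := by rw [mul_assoc, ← Real.exp_add, add_neg_cancel, Real.exp_zero, mul_one]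

lemma rpow_mul_exp_neg_mul_le {α t N : ℝ} (hα : 0 < α) (ht : 0 ≤ t) (hN : 0 < N) :
    t ^ α * Real.exp (-(N * t)) ≤ α ^ α * N ^ (-α) := by
  have h := rpow_mul_exp_neg_le hα (mul_nonneg hN.le ht)
  rw [mul_rpow hN.le ht] at h
  rw [rpow_neg hN.le, ← div_eq_mul_inv, le_div_iff₀ (by positivity)]
  linarith

lemma pow_le_exp_neg_mul {r : ℝ} (hr : 0 ≤ r) (k : ℕ) : r ^ k ≤ Real.exp (-(k * (1 - r))) :=
  calc r ^ k ≤ Real.exp (-(1 - r)) ^ k := by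
        gcongr
        linarith [Real.add_one_le_exp (-(1 - r))]
    _ = Real.exp (-(k * (1 - r))) := by rw [← Real.exp_nat_mul, mul_neg]

lemma rpow_le_mul_rpow_of_le_mul {x y c s : ℝ} (hx : 0 < x) (hxy : x ≤ y) (hyc : y ≤ c * x)
    (hs : s ≤ 1) : y ^ s ≤ c * x ^ s := by
  have hc : 1 ≤ c := le_of_mul_le_mul_right (by linarith) hx
  rcases le_total s 0 with hs0 | hs0
  · calc y ^ s ≤ x ^ s := rpow_le_rpow_of_nonpos hx hxy hs0
      _ ≤ c * x ^ s := le_mul_of_one_le_left (rpow_nonneg hx.le _) hc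
  · calc y ^ s ≤ (c * x) ^ s := rpow_le_rpow (hx.le.trans hxy) hyc hs0
      _ = c ^ s * x ^ s := mul_rpow (by linarith) hx.le
      _ ≤ c * x ^ s := by
          gcongr
          simpa using rpow_le_rpow_of_exponent_le hc hs

lemma mul_le_of_le_of_mul_le {a b x B : ℝ} (ha : 0 ≤ a) (hab : a ≤ b) (hB : 0 ≤ B)
    (h : b * x ≤ B) : a * x ≤ B := by
  rcases le_total 0 x with hx | hx
  · exact (mul_le_mul_of_nonneg_right hab hx).trans h
  · exact (mul_nonpos_of_nonneg_of_nonpos ha hx).trans hB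

lemma rpow_add_sub_one_mul_le_of_pow_mul_le {x s a B : ℝ} {m : ℕ} (hx : 0 < x)
    (h : x ^ m * a ≤ B * x ^ (1 - s)) : x ^ (s + m - 1) * a ≤ B := by
  have hsplit : x ^ (s + m - 1) = x ^ (s - 1) * x ^ m := by
    rw [← Real.rpow_natCast, ← Real.rpow_add hx]
    ring_nf
  calc x ^ (s + m - 1) * a = x ^ (s - 1) * (x ^ m * a) := by rw [hsplit, mul_assoc]
    _ ≤ x ^ (s - 1) * (B * x ^ (1 - s)) := by gcongr
    _ = B := by
        rw [mul_left_comm, ← Real.rpow_add hx, sub_add_sub_cancel', sub_self, Real.rpow_zero,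
          mul_one]

lemma pow_le_descFactorial_add (n m : ℕ) : (n : ℝ) ^ m ≤ (n + m).descFactorial m := by
  have h := Nat.pow_sub_le_descFactorial (n + m) m
  rw [show n + m + 1 - m = n + 1 by omega] at h
  exact_mod_cast (Nat.pow_le_pow_left n.le_succ m).trans h

lemma norm_sub_iteratedDeriv_pow_add (n m : ℕ) (c₁ c₂ a b : ℂ) :
    ‖c₁ * iteratedDeriv m (fun w => w ^ (n + m)) a
        - c₂ * iteratedDeriv m (fun w => w ^ (n + m)) b‖
      = (n + m).descFactorial m * ‖c₁ * a ^ n - c₂ * b ^ n‖ := by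
  simp only [iteratedDeriv_pow, Nat.add_sub_cancel]
  rw [← Complex.norm_natCast, ← norm_mul]
  ring_nf

lemma weighted_norm_deriv_pow_le {α : ℝ} (hα : 0 < α) {N : ℕ} (hN : 1 ≤ N) {z : ℂ}
    (hz : ‖z‖ < 1) :
    (1 - ‖z‖ ^ 2) ^ α * ‖deriv (fun w : ℂ => w ^ N) z‖
      ≤ (2 * α) ^ α * Real.exp 1 * N ^ (1 - α) := by
  obtain ⟨k, rfl⟩ : ∃ k, N = k + 1 := ⟨N - 1, by omega⟩
  set r := ‖z‖
  have hr : 0 ≤ r := norm_nonneg z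
  have hNpos : (0 : ℝ) < k + 1 := by positivity
  have hweight : (1 - r ^ 2) ^ α ≤ 2 ^ α * (1 - r) ^ α := by
    rw [← mul_rpow zero_le_two (by linarith)]
    gcongr
    · nlinarith
    · nlinarith
  have hpow : r ^ k ≤ Real.exp 1 * Real.exp (-((k + 1) * (1 - r))) :=
    calc r ^ k ≤ Real.exp (-(k * (1 - r))) := pow_le_exp_neg_mul hr k
      _ = Real.exp (1 - r) * Real.exp (-((k + 1) * (1 - r))) := by rw [← Real.exp_add]; ring_nf
      _ ≤ Real.exp 1 * Real.exp (-((k + 1) * (1 - r))) := by gcongr; linarith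
  have hdecay := rpow_mul_exp_neg_mul_le hα (sub_nonneg.2 hz.le) hNpos
  rw [deriv_pow_field, norm_mul, norm_pow, Complex.norm_natCast, Nat.add_sub_cancel]
  push_cast
  calc (1 - r ^ 2) ^ α * ((k + 1) * r ^ k)
      ≤ 2 ^ α * (1 - r) ^ α * ((k + 1) * (Real.exp 1 * Real.exp (-((k + 1) * (1 - r))))) := by
        gcongr
    _ = 2 ^ α * Real.exp 1 * (k + 1) * ((1 - r) ^ α * Real.exp (-((k + 1) * (1 - r)))) := by ring
    _ ≤ 2 ^ α * Real.exp 1 * (k + 1) * (α ^ α * (k + 1) ^ (-α)) := by gcongr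
    _ = (2 * α) ^ α * Real.exp 1 * (k + 1) ^ (1 - α) := by
        rw [mul_rpow zero_le_two hα.le, rpow_sub hNpos, rpow_one, rpow_neg hNpos.le]
        ring

lemma inBloch_pow {α : ℝ} (hα : 0 < α) {N : ℕ} (hN : 1 ≤ N) :
    InBloch α (fun w : ℂ => w ^ N) :=
  ⟨(differentiable_pow N).differentiableOn,
    _, fun _ hz => weighted_norm_deriv_pow_le hα hN (mem_ball_zero_iff.1 hz)⟩

lemma blochNorm_pow_le {α : ℝ} (hα : 0 < α) {N : ℕ} (hN : 1 ≤ N) :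
    blochNorm α (fun w : ℂ => w ^ N) ≤ (2 * α) ^ α * Real.exp 1 * N ^ (1 - α) := by
  rw [blochNorm, zero_pow (by omega), norm_zero, zero_add]
  refine Real.sSup_le ?_ (by positivity)
  rintro _ ⟨z, hz, rfl⟩
  exact weighted_norm_deriv_pow_le hα hN (mem_ball_zero_iff.1 hz)

lemma blochNorm_nonneg (α : ℝ) (f : ℂ → ℂ) : 0 ≤ blochNorm α f := by
  refine add_nonneg (norm_nonneg _) (Real.sSup_nonneg ?_)
  rintro _ ⟨z, hz, rfl⟩
  have hz1 : ‖z‖ < 1 := mem_ball_zero_iff.1 hz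
  have : 0 ≤ 1 - ‖z‖ ^ 2 := by nlinarith [norm_nonneg z]
  positivity

theorem stmt10_general (m : ℕ) (α : ℝ) (hα : 0 < α) (v : ℂ → ℝ)
    (u₁ u₂ φ₁ φ₂ : ℂ → ℂ)
    (hbound : ∃ C, ∀ f : ℂ → ℂ, InBloch α f → ∀ z ∈ UD,
      v z * ‖u₁ z * iteratedDeriv m f (φ₁ z) - u₂ z * iteratedDeriv m f (φ₂ z)‖ ≤
        C * blochNorm α f) :
    ∃ C', ∀ n : ℕ, 1 ≤ n → ∀ z ∈ UD,
      (n : ℝ) ^ (α + m - 1) * (v z * ‖u₁ z * φ₁ z ^ n - u₂ z * φ₂ z ^ n‖) ≤ C' := by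
  obtain ⟨C, hC⟩ := hbound
  set K := max C 0 * ((2 * α) ^ α * Real.exp 1)
  refine ⟨K * (m + 1), fun n hn z hz => ?_⟩
  have hn' : (1 : ℝ) ≤ n := by exact_mod_cast hn
  have htest : ((n + m).descFactorial m : ℝ) * (v z * ‖u₁ z * φ₁ z ^ n - u₂ z * φ₂ z ^ n‖)
      ≤ K * ((n + m : ℕ) : ℝ) ^ (1 - α) := by
    have h := hC _ (inBloch_pow hα (N := n + m) (by omega)) z hz
    rw [norm_sub_iteratedDeriv_pow_add, mul_left_comm] at h
    refine h.trans ?_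
    rw [mul_assoc]
    exact mul_le_mul (le_max_left _ _) (blochNorm_pow_le hα (by omega))
      (blochNorm_nonneg _ _) (le_max_right _ _)
  have hgrowth : ((n + m : ℕ) : ℝ) ^ (1 - α) ≤ (m + 1) * (n : ℝ) ^ (1 - α) := by
    refine rpow_le_mul_rpow_of_le_mul (by positivity) (by simp) ?_ (by linarith)
    push_cast
    nlinarith [mul_le_mul_of_nonneg_left hn' (Nat.cast_nonneg (α := ℝ) m)]
  refine rpow_add_sub_one_mul_le_of_pow_mul_le (by positivity) ?_
  refine mul_le_of_le_of_mul_le (by positivity) (pow_le_descFactorial_add n m)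
    (by positivity) (htest.trans ?_)
  rw [mul_assoc K]
  gcongr

/-- if T = D^m_{φ₁,u₁} − D^m_{φ₂,u₂} is bounded from B^α to H^∞_v, then
sup_{n≥1} n^{α+m-1}‖u₁φ₁^n − u₂φ₂^n‖_v < ∞. -/
theorem stmt10 (m : ℕ) (α : ℝ) (hα : 0 < α) (v : ℂ → ℝ)
    (hv : ∀ z ∈ UD, 0 < v z) (hvb : ∃ M, ∀ z ∈ UD, v z ≤ M) (hvc : ContinuousOn v UD)
    (u₁ u₂ φ₁ φ₂ : ℂ → ℂ)
    (hu₁ : DifferentiableOn ℂ u₁ UD) (hu₂ : DifferentiableOn ℂ u₂ UD)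
    (hφ₁ : DifferentiableOn ℂ φ₁ UD) (hφ₂ : DifferentiableOn ℂ φ₂ UD)
    (hφ₁D : ∀ z ∈ UD, φ₁ z ∈ UD) (hφ₂D : ∀ z ∈ UD, φ₂ z ∈ UD)
    (hbound : ∃ C, ∀ f : ℂ → ℂ, InBloch α f → ∀ z ∈ UD,
      v z * ‖u₁ z * iteratedDeriv m f (φ₁ z) - u₂ z * iteratedDeriv m f (φ₂ z)‖ ≤
        C * blochNorm α f) :
    ∃ C', ∀ n : ℕ, 1 ≤ n → ∀ z ∈ UD,
      (n : ℝ) ^ (α + m - 1) * (v z * ‖u₁ z * φ₁ z ^ n - u₂ z * φ₂ z ^ n‖) ≤ C' :=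
  stmt10_general m α hα v u₁ u₂ φ₁ φ₂ hbound
end
end

section
/- Let m ∈ ℕ, α > 0, v a weight, u₁, u₂ ∈ H(D), φ₁, φ₂ holomorphic self-maps of D. For every z ∈ D, with f_{φ₁(z)} the test function satisfying f_a^{(m)}(w) = (1-|a|²)^α/(1-āw)^{2α+m-1}, one has ‖(D^m_{φ₁,u₁} − D^m_{φ₂,u₂}) f_{φ₁(z)}‖_v ≥ |T₁(z)| − [(1-|φ₁(z)|²)^α (1-|φ₂(z)|²)^{α+m-1} / |1-conj(φ₁(z))φ₂(z)|^{2α+m-1}] |T₂(z)|, where T_i(z) = v(z)u_i(z)/(1-|φ_i(z)|²)^{α+m-1}. -/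
/-!
Bound the sup norm from below by its value at `z` and apply the reverse triangle inequality.
With `a = φ₁ z`, `b = φ₂ z` one has `|1 - ā a| = 1 - |a|²`, so `|f^{(m)}(a)| = (1-|a|²)^{-(α+m-1)}`
and `|f^{(m)}(b)| = (1-|a|²)^α / |1 - ā b|^{2α+m-1}`; the factor `(1-|b|²)^{α+m-1}` cancels in
the second term.
-/

noncomputable section
open Complex
open scoped ENNReal

def vNormE (v : ℂ → ℝ) (g : ℂ → ℂ) : ℝ≥0∞ :=
  ⨆ z ∈ UD, ENNReal.ofReal (v z * ‖g z‖)

lemma ofReal_le_vNormE (v : ℂ → ℝ) (g : ℂ → ℂ) {z : ℂ} (hz : z ∈ UD) :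
    ENNReal.ofReal (v z * ‖g z‖) ≤ vNormE v g :=
  le_iSup₂ (f := fun w (_ : w ∈ UD) => ENNReal.ofReal (v w * ‖g w‖)) z hz

lemma norm_ofReal_div_cpow {c : ℝ} (hc : 0 ≤ c) (w : ℂ) (s : ℝ) :
    ‖(c : ℂ) / w ^ (s : ℂ)‖ = c / ‖w‖ ^ s := by
  rw [norm_div, norm_real, Real.norm_of_nonneg hc, norm_cpow_real]

lemma norm_one_sub_conj_mul_self {a : ℂ} (ha : ‖a‖ ≤ 1) :
    ‖1 - (starRingEnd ℂ) a * a‖ = 1 - ‖a‖ ^ 2 := by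
  have hcoe : 1 - (starRingEnd ℂ) a * a = ((1 - ‖a‖ ^ 2 : ℝ) : ℂ) := by
    rw [mul_comm, mul_conj, normSq_eq_norm_sq]
    push_cast
    ring
  rw [hcoe, norm_real, Real.norm_of_nonneg]
  nlinarith [norm_nonneg a]

lemma norm_kernel_self {a : ℂ} (ha : ‖a‖ < 1) (α s : ℝ) :
    ‖(((1 - ‖a‖ ^ 2) ^ α : ℝ) : ℂ) / (1 - (starRingEnd ℂ) a * a) ^ (s : ℂ)‖ =
      (1 - ‖a‖ ^ 2) ^ (α - s) := by
  have hX : 0 < 1 - ‖a‖ ^ 2 := by nlinarith [norm_nonneg a]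
  rw [norm_ofReal_div_cpow (Real.rpow_nonneg hX.le α), norm_one_sub_conj_mul_self ha.le,
    Real.rpow_sub hX]

theorem stmt12_general (m : ℕ) (α : ℝ) (v : ℂ → ℝ) (hv : ∀ z ∈ UD, 0 < v z)
    (u₁ u₂ φ₁ φ₂ : ℂ → ℂ)
    (hφ₁D : ∀ w ∈ UD, φ₁ w ∈ UD) (hφ₂D : ∀ w ∈ UD, φ₂ w ∈ UD)
    (z : ℂ) (hz : z ∈ UD) (f : ℂ → ℂ)
    (hf : ∀ w ∈ UD, iteratedDeriv m f w =
      (((1 - ‖φ₁ z‖ ^ 2) ^ α : ℝ) : ℂ) /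
        (1 - (starRingEnd ℂ) (φ₁ z) * w) ^ (((2 * α + m - 1 : ℝ)) : ℂ)) :
    ENNReal.ofReal
        (v z * ‖u₁ z‖ / (1 - ‖φ₁ z‖ ^ 2) ^ (α + m - 1) -
          (1 - ‖φ₁ z‖ ^ 2) ^ α * (1 - ‖φ₂ z‖ ^ 2) ^ (α + m - 1) /
              ‖1 - (starRingEnd ℂ) (φ₁ z) * φ₂ z‖ ^ (2 * α + m - 1) *
            (v z * ‖u₂ z‖ / (1 - ‖φ₂ z‖ ^ 2) ^ (α + m - 1))) ≤
      vNormE v (fun w =>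
        u₁ w * iteratedDeriv m f (φ₁ w) - u₂ w * iteratedDeriv m f (φ₂ w)) := by
  set a := φ₁ z
  set b := φ₂ z
  have ha : ‖a‖ < 1 := mem_ball_zero_iff.mp (hφ₁D z hz)
  have hb : ‖b‖ < 1 := mem_ball_zero_iff.mp (hφ₂D z hz)
  have hX : 0 < 1 - ‖a‖ ^ 2 := by nlinarith [norm_nonneg a]
  have hY : 0 < 1 - ‖b‖ ^ 2 := by nlinarith [norm_nonneg b]
  have hfa : ‖iteratedDeriv m f a‖ = ((1 - ‖a‖ ^ 2) ^ (α + m - 1))⁻¹ := by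
    rw [hf a (hφ₁D z hz), norm_kernel_self ha, ← Real.rpow_neg hX.le]
    ring_nf
  have hfb : ‖iteratedDeriv m f b‖ =
      (1 - ‖a‖ ^ 2) ^ α / ‖1 - (starRingEnd ℂ) a * b‖ ^ (2 * α + m - 1) := by
    rw [hf b (hφ₂D z hz), norm_ofReal_div_cpow (Real.rpow_nonneg hX.le α)]
  refine le_trans (ENNReal.ofReal_le_ofReal ?_) (ofReal_le_vNormE v _ hz)
  have hYpos : 0 < (1 - ‖b‖ ^ 2) ^ (α + m - 1) := Real.rpow_pos_of_pos hY _
  calc _ = v z * ‖u₁ z * iteratedDeriv m f a‖ - v z * ‖u₂ z * iteratedDeriv m f b‖ := by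
        rw [norm_mul, norm_mul, hfa, hfb]
        field_simp
    _ ≤ v z * ‖u₁ z * iteratedDeriv m f a - u₂ z * iteratedDeriv m f b‖ := by
        rw [← mul_sub]
        exact mul_le_mul_of_nonneg_left (norm_sub_norm_le _ _) (hv z hz).le

/-- lower bound for ‖(D^m_{φ₁,u₁} − D^m_{φ₂,u₂}) f_{φ₁(z)}‖_v, where f_a is any
test function with f_a^{(m)}(w) = (1-|a|²)^α/(1-āw)^{2α+m-1}. -/
theorem stmt12 (m : ℕ) (α : ℝ) (hα : 0 < α) (v : ℂ → ℝ) (hv : ∀ z ∈ UD, 0 < v z)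
    (u₁ u₂ φ₁ φ₂ : ℂ → ℂ)
    (hφ₁D : ∀ w ∈ UD, φ₁ w ∈ UD) (hφ₂D : ∀ w ∈ UD, φ₂ w ∈ UD)
    (z : ℂ) (hz : z ∈ UD) (f : ℂ → ℂ)
    (hf : ∀ w ∈ UD, iteratedDeriv m f w =
      (((1 - ‖φ₁ z‖ ^ 2) ^ α : ℝ) : ℂ) /
        (1 - (starRingEnd ℂ) (φ₁ z) * w) ^ (((2 * α + m - 1 : ℝ)) : ℂ)) :
    ENNReal.ofReal
        (v z * ‖u₁ z‖ / (1 - ‖φ₁ z‖ ^ 2) ^ (α + m - 1) -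
          (1 - ‖φ₁ z‖ ^ 2) ^ α * (1 - ‖φ₂ z‖ ^ 2) ^ (α + m - 1) /
              ‖1 - (starRingEnd ℂ) (φ₁ z) * φ₂ z‖ ^ (2 * α + m - 1) *
            (v z * ‖u₂ z‖ / (1 - ‖φ₂ z‖ ^ 2) ^ (α + m - 1))) ≤
      vNormE v (fun w =>
        u₁ w * iteratedDeriv m f (φ₁ w) - u₂ w * iteratedDeriv m f (φ₂ w)) :=
  stmt12_general m α v hv u₁ u₂ φ₁ φ₂ hφ₁D hφ₂D z hz f hf
end
end
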